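/- Let $C = R + iI$ be a complex symmetric $n \times n$ matrix with $R, I$ real symmetric, $R$ positive definite, and suppose $\mathrm{Re}(C^{-1}) \geq \mu \cdot \mathrm{Id}$ and $R \geq \mathfrak{a} \cdot \mathrm{Id}$ for some $\mu, \mathfrak{a} > 0$. Let $B$ be a real positive semidefinite symmetric matrix with unit diagonal ($B_{ii} = 1$). Then the Hadamard product $C_B := B \circ C$ is invertible, the spectrum of $\mathrm{Re}(C_B)$ is contained in $[\mathfrak{a}, \mu^{-1}]$, and the spectrum of $\mathrm{Re}(C_B^{-1})$ is contained in $[\mu, \mathfrak{a}^{-1}]$. -/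

import Mathlib

/-!
Writing `C = R + iI`, one has `Re (C⁻¹) = (R + I R⁻¹ I)⁻¹`, so the hypotheses say
`𝔞 ≤ R ≤ R + I R⁻¹ I ≤ μ⁻¹` in the Loewner order. By the Schur product theorem and the unit
diagonal, `X ↦ B ∘ X` is monotone and fixes scalars, so `𝔞 ≤ B ∘ R`; applied to the positive block
matrix `[[R, I], [I, I R⁻¹ I]]` it also gives
`B ∘ R + (B ∘ I)(B ∘ R)⁻¹(B ∘ I) ≤ B ∘ (R + I R⁻¹ I) ≤ μ⁻¹`. Thus `C_B = B ∘ R + i B ∘ I` satisfies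
the same two-sided bounds, and inverting them gives the spectral bounds for `Re (C_B⁻¹)`.
-/

open Matrix Complex
open scoped MatrixOrder ComplexOrder

section SpectralBounds

open Ring

variable {A : Type*} [Ring A] [StarRing A] [PartialOrder A] [StarOrderedRing A] [Algebra ℝ A]
  [StarModule ℝ A] {a : A} {r s t : ℝ}

lemma IsSelfAdjoint.of_smul_one_le (h : r • (1 : A) ≤ a) : IsSelfAdjoint a := by
  have h₀ : IsSelfAdjoint (a - r • 1) := .of_nonneg (sub_nonneg.mpr h)
  simpa using h₀.add ((IsSelfAdjoint.all r).smul (.one A))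

variable [TopologicalSpace A] [ContinuousFunctionalCalculus ℝ A IsSelfAdjoint]
  [NonnegSpectrumClass ℝ A]

lemma le_of_mem_spectrum_of_smul_one_le (h : r • (1 : A) ≤ a) :
    ∀ x ∈ spectrum ℝ a, r ≤ x := by
  have ha := IsSelfAdjoint.of_smul_one_le h
  rw [← Algebra.algebraMap_eq_smul_one] at h
  exact (algebraMap_le_iff_le_spectrum ha).mp h

lemma spectrum_subset_Icc_of_le (hs : s • (1 : A) ≤ a) (ht : a ≤ t • (1 : A)) :
    spectrum ℝ a ⊆ Set.Icc s t := by
  have ha := IsSelfAdjoint.of_smul_one_le hs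
  rw [← Algebra.algebraMap_eq_smul_one] at ht
  exact fun x hx => ⟨le_of_mem_spectrum_of_smul_one_le hs x hx,
    (le_algebraMap_iff_spectrum_le ha).mp ht x hx⟩

lemma ringInverse_eq_cfc_inv_of_smul_one_le (hr : 0 < r) (h : r • (1 : A) ≤ a) :
    a⁻¹ʳ = cfc (fun x : ℝ => x⁻¹) a := by
  have ha := IsSelfAdjoint.of_smul_one_le h
  have hunit : IsUnit a := spectrum.isUnit_of_zero_notMem ℝ fun h0 =>
    (le_of_mem_spectrum_of_smul_one_le h 0 h0).not_gt hr
  exact (cfc_ringInverse_id (R := ℝ) a hunit).symm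

lemma ringInverse_le_inv_smul_one (hr : 0 < r) (h : r • (1 : A) ≤ a) :
    a⁻¹ʳ ≤ r⁻¹ • (1 : A) := by
  have hspec := le_of_mem_spectrum_of_smul_one_le h
  rw [ringInverse_eq_cfc_inv_of_smul_one_le hr h, ← Algebra.algebraMap_eq_smul_one,
    cfc_le_algebraMap_iff _ _ _ ?_ (IsSelfAdjoint.of_smul_one_le h)]
  · exact fun x hx => inv_anti₀ hr (hspec x hx)
  · exact continuousOn_inv₀.mono fun x hx => (hr.trans_le (hspec x hx)).ne'

lemma inv_smul_one_le_ringInverse (hs : 0 < s) (hsa : s • (1 : A) ≤ a) (hat : a ≤ t • (1 : A)) :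
    t⁻¹ • (1 : A) ≤ a⁻¹ʳ := by
  have hspec := spectrum_subset_Icc_of_le hsa hat
  rw [ringInverse_eq_cfc_inv_of_smul_one_le hs hsa, ← Algebra.algebraMap_eq_smul_one,
    algebraMap_le_cfc_iff _ _ _ ?_ (IsSelfAdjoint.of_smul_one_le hsa)]
  · exact fun x hx => inv_anti₀ (hs.trans_le (hspec hx).1) (hspec hx).2
  · exact continuousOn_inv₀.mono fun x hx => (hs.trans_le (hspec hx).1).ne'

end SpectralBounds

namespace Matrix

lemma fromBlocks_hadamard {l m n o α : Type*} [Mul α]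
    (A₁ A₂ : Matrix n l α) (B₁ B₂ : Matrix n m α) (C₁ C₂ : Matrix o l α) (D₁ D₂ : Matrix o m α) :
    fromBlocks A₁ B₁ C₁ D₁ ⊙ fromBlocks A₂ B₂ C₂ D₂ =
      fromBlocks (A₁ ⊙ A₂) (B₁ ⊙ B₂) (C₁ ⊙ C₂) (D₁ ⊙ D₂) := by
  ext (i | i) (j | j) <;> rfl

lemma hadamard_sub {m n α : Type*} [NonUnitalNonAssocRing α] (A B C : Matrix m n α) :
    A ⊙ (B - C) = A ⊙ B - A ⊙ C := by
  ext i j; simp [mul_sub]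

lemma hadamard_smul_one {n α : Type*} [DecidableEq n] [CommSemiring α] {B : Matrix n n α}
    (hB : ∀ i, B i i = 1) (c : α) : B ⊙ (c • 1) = c • 1 := by
  rw [hadamard_smul, hadamard_one_eq_one_iff.mpr (funext hB)]

variable {n 𝕜 : Type*} [RCLike 𝕜] {B X Y : Matrix n n 𝕜}

lemma PosSemidef.hadamard_mono (hB : B.PosSemidef) (hXY : X ≤ Y) : B ⊙ X ≤ B ⊙ Y := by
  rw [le_iff, ← hadamard_sub]
  exact hB.hadamard hXY

variable [DecidableEq n]

lemma PosDef.of_smul_one_le {a : ℝ} (ha : 0 < a) (h : a • (1 : Matrix n n 𝕜) ≤ X) : X.PosDef := by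
  simpa using (PosDef.one.smul ha).add_posSemidef h

variable [Fintype n]

lemma PosDef.le_add_conjTranspose_mul_inv_mul (hX : X.PosDef) (Y : Matrix n n 𝕜) :
    X ≤ X + Yᴴ * X⁻¹ * Y :=
  le_add_of_nonneg_right (hX.inv.posSemidef.conjTranspose_mul_mul_same Y).nonneg

lemma PosSemidef.fromBlocks_self (hB : B.PosSemidef) : (fromBlocks B B B B).PosSemidef := by
  convert hB.conjTranspose_mul_mul_same (fromCols 1 1 : Matrix n (n ⊕ n) 𝕜) using 1
  ext (i | i) (j | j) <;> simp [fromCols, mul_apply, one_apply]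

/-- `[[X, Y], [Yᴴ, Yᴴ X⁻¹ Y]]` is positive semidefinite, hence so is its Hadamard product with
`[[B, B], [B, B]]`, and the Schur complement of the latter is the difference of the two sides. -/
lemma PosSemidef.hadamard_add_conjTranspose_mul_inv_mul_le (hB : B.PosSemidef) (hX : X.PosDef)
    (hBX : (B ⊙ X).PosDef) (Y : Matrix n n 𝕜) :
    B ⊙ X + (B ⊙ Y)ᴴ * (B ⊙ X)⁻¹ * (B ⊙ Y) ≤ B ⊙ (X + Yᴴ * X⁻¹ * Y) := by
  have := hX.isUnit.invertible
  have := hBX.isUnit.invertible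
  have hblock : (fromBlocks X Y Yᴴ (Yᴴ * X⁻¹ * Y)).PosSemidef := by
    rw [PosDef.fromBlocks₁₁ _ _ hX, sub_self]
    exact .zero
  have hprod := hB.fromBlocks_self.hadamard hblock
  have hBY : B ⊙ Yᴴ = (B ⊙ Y)ᴴ := by
    rw [conjTranspose_hadamard, hB.isHermitian.eq, hadamard_comm]
  rw [fromBlocks_hadamard, hBY, PosDef.fromBlocks₁₁ _ _ hBX] at hprod
  rw [hadamard_add]
  exact add_le_add_right (le_iff.mpr hprod) _

lemma inv_le_inv_smul_one {r : ℝ} (hr : 0 < r) (h : r • (1 : Matrix n n 𝕜) ≤ X) :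
    X⁻¹ ≤ r⁻¹ • (1 : Matrix n n 𝕜) := by
  simpa only [nonsing_inv_eq_ringInverse] using ringInverse_le_inv_smul_one hr h

lemma inv_smul_one_le_inv {s t : ℝ} (hs : 0 < s) (hsX : s • (1 : Matrix n n 𝕜) ≤ X)
    (hXt : X ≤ t • (1 : Matrix n n 𝕜)) : t⁻¹ • (1 : Matrix n n 𝕜) ≤ X⁻¹ := by
  simpa only [nonsing_inv_eq_ringInverse] using inv_smul_one_le_ringInverse hs hsX hXt

lemma le_inv_smul_one_of_smul_one_le_inv (hX : IsUnit X) {r : ℝ} (hr : 0 < r)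
    (h : r • (1 : Matrix n n 𝕜) ≤ X⁻¹) : X ≤ r⁻¹ • (1 : Matrix n n 𝕜) := by
  simpa only [nonsing_inv_nonsing_inv X ((isUnit_iff_isUnit_det X).mp hX)]
    using inv_le_inv_smul_one hr h

lemma IsHermitian.eigenvalues_mem_Icc_of_le {M : Matrix n n 𝕜} (hM : M.IsHermitian) {s t : ℝ}
    (hs : s • (1 : Matrix n n 𝕜) ≤ M) (ht : M ≤ t • (1 : Matrix n n 𝕜)) (i : n) :
    hM.eigenvalues i ∈ Set.Icc s t :=
  spectrum_subset_Icc_of_le hs ht (hM.eigenvalues_mem_spectrum_real i)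

end Matrix

section RealImaginaryParts

variable {n : Type*}

lemma map_re_ofReal_add_I_smul (X Y : Matrix n n ℝ) :
    (X.map ofReal + I • Y.map ofReal).map re = X := by
  ext i j; simp

lemma map_re_ofReal_sub_I_smul (X Y : Matrix n n ℝ) :
    (X.map ofReal - I • Y.map ofReal).map re = X := by
  ext i j; simp

lemma map_ofReal_hadamard_ofReal_add_I_smul (B X Y : Matrix n n ℝ) :
    B.map ofReal ⊙ (X.map ofReal + I • Y.map ofReal) =
      (B ⊙ X).map ofReal + I • (B ⊙ Y).map ofReal := by
  ext i j; simp [mul_add, mul_left_comm]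

variable [Fintype n] [DecidableEq n] {X Y : Matrix n n ℝ}

lemma ofReal_add_I_smul_mul_eq_one (hX : IsUnit X) (hK : IsUnit (X + Y * X⁻¹ * Y)) :
    (X.map ofReal + I • Y.map ofReal) *
      ((X + Y * X⁻¹ * Y)⁻¹.map ofReal - I • (X⁻¹ * Y * (X + Y * X⁻¹ * Y)⁻¹).map ofReal) = 1 := by
  set K := X + Y * X⁻¹ * Y
  let f := (ofRealHom : ℝ →+* ℂ).mapMatrix (m := n)
  have hre : X * K⁻¹ + Y * (X⁻¹ * Y * K⁻¹) = 1 := by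
    rw [← mul_nonsing_inv K ((isUnit_iff_isUnit_det K).mp hK), add_mul]
    simp only [mul_assoc]
  have him : Y * K⁻¹ - X * (X⁻¹ * Y * K⁻¹) = 0 := by
    rw [← mul_assoc, ← mul_assoc, mul_nonsing_inv X ((isUnit_iff_isUnit_det X).mp hX), one_mul,
      sub_self]
  calc (f X + I • f Y) * (f K⁻¹ - I • f (X⁻¹ * Y * K⁻¹))
      = f (X * K⁻¹ + Y * (X⁻¹ * Y * K⁻¹)) + I • f (Y * K⁻¹ - X * (X⁻¹ * Y * K⁻¹)) := by
        simp only [map_add, map_sub, map_mul, add_mul, mul_sub, smul_mul_assoc, mul_smul_comm,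
          smul_sub, smul_add, smul_smul, I_mul_I, neg_smul, one_smul]
        abel
    _ = 1 := by rw [hre, him, map_one, map_zero, smul_zero, add_zero]

lemma map_re_inv_ofReal_add_I_smul (hX : IsUnit X) (hK : IsUnit (X + Y * X⁻¹ * Y)) :
    (X.map ofReal + I • Y.map ofReal)⁻¹.map re = (X + Y * X⁻¹ * Y)⁻¹ := by
  rw [inv_eq_right_inv (ofReal_add_I_smul_mul_eq_one hX hK), map_re_ofReal_sub_I_smul]

lemma ofReal_add_I_smul_spectral_bounds (hY : Y.IsHermitian) {a b : ℝ} (ha : 0 < a)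
    (haX : a • 1 ≤ X) (hb : X + Y * X⁻¹ * Y ≤ b • 1) :
    IsUnit (X.map ofReal + I • Y.map ofReal).det ∧
      (a • 1 ≤ (X.map ofReal + I • Y.map ofReal).map re ∧
        (X.map ofReal + I • Y.map ofReal).map re ≤ b • 1) ∧
      (b⁻¹ • 1 ≤ (X.map ofReal + I • Y.map ofReal)⁻¹.map re ∧
        (X.map ofReal + I • Y.map ofReal)⁻¹.map re ≤ a⁻¹ • 1) := by
  have hX : X.PosDef := PosDef.of_smul_one_le ha haX
  have hXK : X ≤ X + Y * X⁻¹ * Y := by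
    simpa only [hY.eq] using hX.le_add_conjTranspose_mul_inv_mul Y
  have haK := haX.trans hXK
  have hK : (X + Y * X⁻¹ * Y).PosDef := PosDef.of_smul_one_le ha haK
  rw [map_re_ofReal_add_I_smul, map_re_inv_ofReal_add_I_smul hX.isUnit hK.isUnit]
  exact ⟨isUnit_det_of_right_inverse (ofReal_add_I_smul_mul_eq_one hX.isUnit hK.isUnit),
    ⟨haX, hXK.trans hb⟩, inv_smul_one_le_inv ha haK hb, inv_le_inv_smul_one ha haK⟩

end RealImaginaryParts

/-- Spectral bounds for the Hadamard-interpolated covariance: if `C = R + i·Im` with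
`Re C⁻¹ ≥ μ`, `R ≥ 𝔞` (Loewner order) and `B` is real positive semidefinite with unit
diagonal, then `C_B := B ∘ C` is invertible, `σ(Re C_B) ⊆ [𝔞, μ⁻¹]` and
`σ(Re C_B⁻¹) ⊆ [μ, 𝔞⁻¹]`. -/
theorem hadamard_covariance_spectrum {n : Type*} [Fintype n] [DecidableEq n]
    (R Im B : Matrix n n ℝ) (μ a : ℝ) (hμ : 0 < μ) (ha : 0 < a)
    (hR : R.PosDef) (hIm : Im.IsHermitian) (hB : B.PosSemidef) (hBdiag : ∀ i, B i i = 1)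
    (C CB : Matrix n n ℂ)
    (hC : C = R.map (Complex.ofReal) + Complex.I • Im.map (Complex.ofReal))
    (hCB : CB = Matrix.hadamard (B.map (Complex.ofReal)) C)
    (hμle : ((C⁻¹.map Complex.re) - μ • (1 : Matrix n n ℝ)).PosSemidef)
    (hale : (R - a • (1 : Matrix n n ℝ)).PosSemidef)
    (h1 : (CB.map Complex.re).IsHermitian)
    (h2 : ((CB⁻¹).map Complex.re).IsHermitian) :
    IsUnit CB.det ∧ (∀ i, h1.eigenvalues i ∈ Set.Icc a μ⁻¹) ∧
      ∀ i, h2.eigenvalues i ∈ Set.Icc μ a⁻¹ := by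
  have hK : (R + Im * R⁻¹ * Im).PosDef := by
    simpa only [hIm.eq] using hR.add_posSemidef (hR.inv.posSemidef.conjTranspose_mul_mul_same Im)
  have hKle : R + Im * R⁻¹ * Im ≤ μ⁻¹ • 1 := le_inv_smul_one_of_smul_one_le_inv hK.isUnit hμ <| by
    rwa [hC, map_re_inv_ofReal_add_I_smul hR.isUnit hK.isUnit] at hμle
  have haRB : a • 1 ≤ B ⊙ R := by
    simpa only [hadamard_smul_one hBdiag] using hB.hadamard_mono hale
  have hBIm : (B ⊙ Im).IsHermitian := hB.isHermitian.hadamard hIm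
  have hKBle : B ⊙ R + (B ⊙ Im) * (B ⊙ R)⁻¹ * (B ⊙ Im) ≤ μ⁻¹ • 1 :=
    calc _ = B ⊙ R + (B ⊙ Im)ᴴ * (B ⊙ R)⁻¹ * (B ⊙ Im) := by rw [hBIm.eq]
      _ ≤ B ⊙ (R + Imᴴ * R⁻¹ * Im) :=
        hB.hadamard_add_conjTranspose_mul_inv_mul_le hR (PosDef.of_smul_one_le ha haRB) Im
      _ ≤ B ⊙ (μ⁻¹ • 1) := hB.hadamard_mono (by rwa [hIm.eq])
      _ = μ⁻¹ • 1 := hadamard_smul_one hBdiag _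
  rw [hC, map_ofReal_hadamard_ofReal_add_I_smul] at hCB
  subst hCB
  obtain ⟨hdet, ⟨hRe₁, hRe₂⟩, hInv₁, hInv₂⟩ :=
    ofReal_add_I_smul_spectral_bounds hBIm ha haRB hKBle
  refine ⟨hdet, h1.eigenvalues_mem_Icc_of_le hRe₁ hRe₂, ?_⟩
  simpa only [inv_inv] using h2.eigenvalues_mem_Icc_of_le hInv₁ hInv₂
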